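/- Let $N \in \mathbb{N}$, $\sigma \in (0,1)$, $m \in \mathbb{N}_0$, $s = m + \sigma$, $t > 2$, and let $K(a,b) := \int_B \Gamma_B(R_t a, R_t z)\, \Gamma_B(z, b)\, dz$ for $a, b \in B^t := B_1(te_1)$, where $\Gamma_B(x,y) = (-1)^m\gamma_{N,\sigma}|x-y|^{-N}(1-|x|^2)^s(|y|^2-1)^{-s}$ is the Poisson kernel and $R_t$ is reflection across $\{2x_1 = t\}$. Then for all $a, b \in B^t$: $|K(a,b)| \leq \left(\frac{|a|^2-1}{|b|^2-1}\right)^s \frac{|B|\,\gamma_{N,\sigma}^2}{(t-2)^{2N}}$. -/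

import Mathlib

/-!
Write `x' = R_t x`. The reflection is an isometry exchanging `B` and `B^t`, and since
`‖x‖² + ‖x'‖² ≥ t² / 2 ≥ 2` it exchanges the hmargins too: `1 - ‖x'‖² ≤ ‖x‖² - 1`. Hence on `B`
the integrand is bounded pointwise: both distances are at least `t - 2`, and after
`1 - ‖a'‖² ≤ ‖a‖² - 1` and `1 - ‖z‖² ≤ ‖z'‖² - 1` the `z`-dependent factors `(‖z'‖² - 1)^s`
cancel, leaving `γ² (t - 2)^(-2N) ((‖a‖² - 1) / (‖b‖² - 1))^s`. Integrating over `B` gives `|B|`.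
-/

open Real Metric MeasureTheory
open scoped RealInnerProductSpace

lemma dist_sub_add_le_dist_of_mem_ball {X : Type*} [PseudoMetricSpace X] {c c' x y : X}
    {r r' : ℝ} (hx : x ∈ ball c r) (hy : y ∈ ball c' r') :
    dist c c' - (r + r') ≤ dist x y := by
  rw [mem_ball] at hx hy
  linarith [dist_triangle4 c x y c', dist_comm x c]

section Reflection

variable {E : Type*} [NormedAddCommGroup E] [InnerProductSpace ℝ E]

/-- For a unit vector `e`, the reflection across the hyperplane `{x | 2 ⟪x, e⟫ = t}`. -/
def hyperplaneReflection (e : E) (t : ℝ) (x : E) : E := x + (t - 2 * ⟪x, e⟫) • e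

variable {e : E} {t : ℝ}

lemma norm_add_smul_sq_of_norm_eq_one (he : ‖e‖ = 1) (x : E) (c : ℝ) :
    ‖x + c • e‖ ^ 2 = ‖x‖ ^ 2 + 2 * c * ⟪x, e⟫ + c ^ 2 := by
  rw [norm_add_sq_real, inner_smul_right, norm_smul, he, Real.norm_eq_abs, mul_one, sq_abs]
  ring

lemma norm_hyperplaneReflection_sq (he : ‖e‖ = 1) (x : E) :
    ‖hyperplaneReflection e t x‖ ^ 2 = ‖x‖ ^ 2 + t * (t - 2 * ⟪x, e⟫) := by
  rw [hyperplaneReflection, norm_add_smul_sq_of_norm_eq_one he]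
  ring

lemma norm_hyperplaneReflection (he : ‖e‖ = 1) (x : E) :
    ‖hyperplaneReflection e t x‖ = ‖x - t • e‖ := by
  rw [← sq_eq_sq₀ (norm_nonneg _) (norm_nonneg _), norm_hyperplaneReflection_sq he,
    sub_eq_add_neg x, ← neg_smul, norm_add_smul_sq_of_norm_eq_one he]
  ring

lemma norm_hyperplaneReflection_sub (he : ‖e‖ = 1) (x y : E) :
    ‖hyperplaneReflection e t x - hyperplaneReflection e t y‖ = ‖x - y‖ := by
  have hsub : hyperplaneReflection e t x - hyperplaneReflection e t y
      = (x - y) + (-2 * ⟪x - y, e⟫) • e := by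
    rw [hyperplaneReflection, hyperplaneReflection, inner_sub_left]
    module
  rw [← sq_eq_sq₀ (norm_nonneg _) (norm_nonneg _), hsub, norm_add_smul_sq_of_norm_eq_one he]
  ring

lemma hyperplaneReflection_involutive (he : ‖e‖ = 1) :
    Function.Involutive (hyperplaneReflection e t) := by
  intro x
  have hee : ⟪e, e⟫ = 1 := by rw [real_inner_self_eq_norm_sq, he, one_pow]
  simp only [hyperplaneReflection, inner_add_left, real_inner_smul_left, hee]
  module

lemma one_sub_norm_sq_le_norm_hyperplaneReflection_sq_sub_one (he : ‖e‖ = 1) (ht : 2 ≤ |t|)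
    (x : E) : 1 - ‖x‖ ^ 2 ≤ ‖hyperplaneReflection e t x‖ ^ 2 - 1 := by
  have hcs : ⟪x, e⟫ ^ 2 ≤ ‖x‖ ^ 2 := by
    simpa [he] using sq_le_sq' (abs_le.1 (abs_real_inner_le_norm x e)).1
      (abs_le.1 (abs_real_inner_le_norm x e)).2
  have ht2 : 4 ≤ t ^ 2 := by nlinarith [sq_abs t]
  rw [norm_hyperplaneReflection_sq he]
  nlinarith [sq_nonneg (2 * ⟪x, e⟫ - t)]

lemma one_sub_norm_hyperplaneReflection_sq_le (he : ‖e‖ = 1) (ht : 2 ≤ |t|) (x : E) :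
    1 - ‖hyperplaneReflection e t x‖ ^ 2 ≤ ‖x‖ ^ 2 - 1 := by
  simpa only [hyperplaneReflection_involutive he x] using
    one_sub_norm_sq_le_norm_hyperplaneReflection_sq_sub_one he ht (hyperplaneReflection e t x)

lemma norm_hyperplaneReflection_lt_one (he : ‖e‖ = 1) {x : E} (hx : x ∈ ball (t • e) 1) :
    ‖hyperplaneReflection e t x‖ < 1 := by
  rwa [norm_hyperplaneReflection he, ← dist_eq_norm, ← mem_ball]

end Reflection

lemma EuclideanSpace.eq_hyperplaneReflection_single {N : ℕ} (hN : 0 < N) {t : ℝ}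
    {R : EuclideanSpace ℝ (Fin N) → EuclideanSpace ℝ (Fin N)}
    (hR : ∀ x, R x = fun i : Fin N => if (i : ℕ) = 0 then t - x i else x i) :
    R = hyperplaneReflection (EuclideanSpace.single ⟨0, hN⟩ 1) t := by
  ext x i
  simp only [hR, hyperplaneReflection, EuclideanSpace.inner_single_right, PiLp.add_apply,
    PiLp.smul_apply, PiLp.single_apply, Fin.ext_iff, smul_eq_mul, one_mul, ringHom_apply]
  split_ifs with hi
  · rw [show i = ⟨0, hN⟩ from Fin.ext hi]
    ring
  · ring

section PoissonKernel

variable {E : Type*} [SeminormedAddCommGroup E]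

/-- The Poisson kernel `Γ_B(x, y)` of `(-Δ)^(m+σ)` on the unit ball in dimension `n`, with `γ`
standing for `γ_{n,σ}`. -/
noncomputable def fractionalPoissonKernel (m n : ℕ) (γ s : ℝ) (x y : E) : ℝ :=
  (-1) ^ m * γ * ‖x - y‖ ^ (-(n : ℝ)) * ((1 - ‖x‖ ^ 2) ^ s / (‖y‖ ^ 2 - 1) ^ s)

variable {m n : ℕ} {γ s d A : ℝ} {x y z w : E}

lemma abs_fractionalPoissonKernel_le (hs : 0 ≤ s) (hd : 0 < d) (hxy : d ≤ ‖x - y‖)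
    (hx : 0 ≤ 1 - ‖x‖ ^ 2) (hxA : 1 - ‖x‖ ^ 2 ≤ A) (hy : 0 ≤ ‖y‖ ^ 2 - 1) :
    |fractionalPoissonKernel m n γ s x y| ≤ |γ| * d ^ (-(n : ℝ)) * (A ^ s / (‖y‖ ^ 2 - 1) ^ s) := by
  rw [fractionalPoissonKernel, abs_mul, abs_mul, abs_mul, abs_pow, abs_neg, abs_one, one_pow,
    one_mul, abs_of_nonneg (rpow_nonneg (norm_nonneg _) _),
    abs_of_nonneg (div_nonneg (rpow_nonneg hx s) (rpow_nonneg hy s))]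
  gcongr |γ| * ?_ * (?_ / _)
  · exact rpow_le_rpow_of_nonpos hd hxy (by simp)
  · exact rpow_le_rpow hx hxA hs

lemma abs_fractionalPoissonKernel_mul_le (hs : 0 ≤ s) (hd : 0 < d)
    (hxy : d ≤ ‖x - y‖) (hzw : d ≤ ‖z - w‖) (hx : 0 ≤ 1 - ‖x‖ ^ 2) (hxA : 1 - ‖x‖ ^ 2 ≤ A)
    (hz : 0 ≤ 1 - ‖z‖ ^ 2) (hzy : 1 - ‖z‖ ^ 2 ≤ ‖y‖ ^ 2 - 1) (hy : 0 < ‖y‖ ^ 2 - 1)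
    (hw : 0 ≤ ‖w‖ ^ 2 - 1) :
    |fractionalPoissonKernel m n γ s x y * fractionalPoissonKernel m n γ s z w| ≤
      A ^ s / (‖w‖ ^ 2 - 1) ^ s * (γ ^ 2 / d ^ (2 * n)) := by
  have hA : 0 ≤ A := hx.trans hxA
  have hys : (‖y‖ ^ 2 - 1) ^ s ≠ 0 := (rpow_pos_of_pos hy s).ne'
  calc |fractionalPoissonKernel m n γ s x y * fractionalPoissonKernel m n γ s z w|
      ≤ (|γ| * d ^ (-(n : ℝ)) * (A ^ s / (‖y‖ ^ 2 - 1) ^ s)) *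
          (|γ| * d ^ (-(n : ℝ)) * ((‖y‖ ^ 2 - 1) ^ s / (‖w‖ ^ 2 - 1) ^ s)) := by
        rw [abs_mul]
        exact mul_le_mul (abs_fractionalPoissonKernel_le hs hd hxy hx hxA hy.le)
          (abs_fractionalPoissonKernel_le hs hd hzw hz hzy hw) (abs_nonneg _) (by positivity)
    _ = A ^ s / (‖w‖ ^ 2 - 1) ^ s * (γ ^ 2 / d ^ (2 * n)) := by
        rw [rpow_neg hd.le, rpow_natCast, ← sq_abs γ]
        field_simp
        ring

end PoissonKernel

theorem poisson_kernel_iterate_estimate_general (N : ℕ) (hN : 0 < N) (m : ℕ)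
    (σ : ℝ) (hσ : σ ∈ Set.Ioo (0 : ℝ) 1) (s : ℝ) (hs : s = m + σ)
    (γ : ℝ)
    (t : ℝ) (ht : 2 < t)
    (Γb : EuclideanSpace ℝ (Fin N) → EuclideanSpace ℝ (Fin N) → ℝ)
    (hΓ : ∀ a b : EuclideanSpace ℝ (Fin N),
      Γb a b = (-1 : ℝ) ^ m * γ * ‖a - b‖ ^ (-(N : ℝ)) *
        ((1 - ‖a‖ ^ 2) ^ s / (‖b‖ ^ 2 - 1) ^ s))
    (R : EuclideanSpace ℝ (Fin N) → EuclideanSpace ℝ (Fin N))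
    (hR : ∀ x, R x = fun i : Fin N => if (i : ℕ) = 0 then t - x i else x i)
    (a b : EuclideanSpace ℝ (Fin N))
    (ha : a ∈ ball (t • EuclideanSpace.single (⟨0, hN⟩ : Fin N) (1 : ℝ)) 1)
    (hb : b ∈ ball (t • EuclideanSpace.single (⟨0, hN⟩ : Fin N) (1 : ℝ)) 1) :
    |∫ z in ball (0 : EuclideanSpace ℝ (Fin N)) 1, Γb (R a) (R z) * Γb z b| ≤
      ((‖a‖ ^ 2 - 1) / (‖b‖ ^ 2 - 1)) ^ s *
        ((volume (ball (0 : EuclideanSpace ℝ (Fin N)) 1)).toReal * γ ^ 2 /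
          (t - 2) ^ (2 * N)) := by
  set e := EuclideanSpace.single (⟨0, hN⟩ : Fin N) (1 : ℝ)
  have he : ‖e‖ = 1 := by simp [e]
  have ht' : 2 ≤ |t| := by rw [abs_of_pos (by linarith)]; exact ht.le
  have hte : dist (t • e) 0 = t := by
    rw [dist_zero_right, norm_smul, he, mul_one, Real.norm_of_nonneg (by linarith)]
  obtain rfl : R = hyperplaneReflection e t := EuclideanSpace.eq_hyperplaneReflection_single hN hR
  obtain rfl : Γb = fractionalPoissonKernel m N γ s := funext₂ hΓ
  have hs0 : 0 ≤ s := hs ▸ add_nonneg m.cast_nonneg hσ.1.le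
  have hmargin : ∀ x : EuclideanSpace ℝ (Fin N), ‖x‖ < 1 → 0 < 1 - ‖x‖ ^ 2 :=
    fun x hx => sub_pos.2 (pow_lt_one₀ (norm_nonneg x) hx two_ne_zero)
  have hRa := hmargin _ (norm_hyperplaneReflection_lt_one he ha)
  have hRb := hmargin _ (norm_hyperplaneReflection_lt_one he hb)
  have ha1 := one_sub_norm_hyperplaneReflection_sq_le he ht' a
  have hb1 := one_sub_norm_hyperplaneReflection_sq_le he ht' b
  have hbound : ∀ z ∈ ball (0 : EuclideanSpace ℝ (Fin N)) 1,
      ‖fractionalPoissonKernel m N γ s (hyperplaneReflection e t a) (hyperplaneReflection e t z) *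
        fractionalPoissonKernel m N γ s z b‖ ≤
      (‖a‖ ^ 2 - 1) ^ s / (‖b‖ ^ 2 - 1) ^ s * (γ ^ 2 / (t - 2) ^ (2 * N)) := by
    intro z hz
    have hz1 := hmargin z (mem_ball_zero_iff.1 hz)
    have hzR := one_sub_norm_sq_le_norm_hyperplaneReflection_sq_sub_one he ht' z
    have haz := dist_sub_add_le_dist_of_mem_ball ha hz
    have hzb := dist_sub_add_le_dist_of_mem_ball hz hb
    rw [hte, dist_eq_norm, ← norm_hyperplaneReflection_sub he] at haz
    rw [dist_comm, hte, dist_eq_norm] at hzb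
    exact abs_fractionalPoissonKernel_mul_le hs0 (sub_pos.2 ht) (by linarith) (by linarith)
      hRa.le ha1 hz1.le hzR (hz1.trans_le hzR) (hRb.trans_le hb1).le
  calc _ ≤ (‖a‖ ^ 2 - 1) ^ s / (‖b‖ ^ 2 - 1) ^ s * (γ ^ 2 / (t - 2) ^ (2 * N)) *
        (volume (ball (0 : EuclideanSpace ℝ (Fin N)) 1)).toReal :=
      norm_setIntegral_le_of_norm_le_const measure_ball_lt_top hbound
    _ = _ := by rw [div_rpow (hRa.trans_le ha1).le (hRb.trans_le hb1).le]; ring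

/-- Estimate for the iterated Poisson kernel
`K(a,b) = ∫_B Γ_B(R_t a, R_t z) Γ_B(z,b) dz` on the translated ball `B¹ = B₁(t e₁)`:
`|K(a,b)| ≤ ((|a|²-1)/(|b|²-1))^s |B| γ²/(t-2)^{2N}`. -/
theorem poisson_kernel_iterate_estimate (N : ℕ) (hN : 0 < N) (m : ℕ)
    (σ : ℝ) (hσ : σ ∈ Set.Ioo (0 : ℝ) 1) (s : ℝ) (hs : s = m + σ)
    (γ : ℝ)
    (hγ : γ = 2 / (Real.Gamma σ * Real.Gamma (1 - σ) *
      (2 * π ^ ((N : ℝ) / 2) / Real.Gamma ((N : ℝ) / 2))))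
    (t : ℝ) (ht : 2 < t)
    (Γb : EuclideanSpace ℝ (Fin N) → EuclideanSpace ℝ (Fin N) → ℝ)
    (hΓ : ∀ a b : EuclideanSpace ℝ (Fin N),
      Γb a b = (-1 : ℝ) ^ m * γ * ‖a - b‖ ^ (-(N : ℝ)) *
        ((1 - ‖a‖ ^ 2) ^ s / (‖b‖ ^ 2 - 1) ^ s))
    (R : EuclideanSpace ℝ (Fin N) → EuclideanSpace ℝ (Fin N))
    (hR : ∀ x, R x = fun i : Fin N => if (i : ℕ) = 0 then t - x i else x i)
    (a b : EuclideanSpace ℝ (Fin N))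
    (ha : a ∈ ball (t • EuclideanSpace.single (⟨0, hN⟩ : Fin N) (1 : ℝ)) 1)
    (hb : b ∈ ball (t • EuclideanSpace.single (⟨0, hN⟩ : Fin N) (1 : ℝ)) 1) :
    |∫ z in ball (0 : EuclideanSpace ℝ (Fin N)) 1, Γb (R a) (R z) * Γb z b| ≤
      ((‖a‖ ^ 2 - 1) / (‖b‖ ^ 2 - 1)) ^ s *
        ((volume (ball (0 : EuclideanSpace ℝ (Fin N)) 1)).toReal * γ ^ 2 /
          (t - 2) ^ (2 * N)) :=
  poisson_kernel_iterate_estimate_general N hN m σ hσ s hs γ t ht Γb hΓ R hR a b ha hb
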